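/- Let I be a nonempty finite set. For every W : Z₆^I → Z₂ and every a ∈ Z₂^I, ⟨⟨W, L_a⟩⟩ = ⟨⟨R(W), L_a⟩⟩; moreover |spt R(W)| ≡ ⟨⟨W, L_{1_I}⟩⟩ (mod 2), where 1_I ∈ Z₂^I is the all-ones vector. Consequently, if C ≤ Z₂^I is a subspace with 1_I ∈ C, D := span_{Z₂}({1_{Z₆^I}} ∪ {L_a : a ∈ C}), and W ∈ V + D^⊥ for some V : Z₆^I → Z₂ supported on B, then R(W) − W ∈ D^⊥. -/
import Mathlib


open scoped BigOperators
open scoped Classical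
open MeasureTheory Filter
open scoped ENNReal NNReal

noncomputable section

/-- The length of the shortest word in the alphabet `Gens` leading from `x` to `y`
under the (not necessarily associative) multiplication `mul`. -/
def wordLen {α : Type*} (mul : α → α → α) (Gens : Set α) (x y : α) : ℕ :=
  sInf {ℓ : ℕ | ∃ w : List α, (∀ g ∈ w, g ∈ Gens) ∧ w.length = ℓ ∧ w.foldl mul x = y}

/-- The word metric on a group associated with a generating set `S`. -/
def groupWordDist {G : Type*} [Group G] (S : Set G) (g h : G) : ℕ :=
  wordLen (· * ·) S g h

/-- A group has exponential growth w.r.t. a generating set `S` if there is `c > 1`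
such that the ball of radius `r` about the identity contains at least `c ^ r`
points for infinitely many positive integers `r`. -/
def HasExpGrowth {G : Type*} [Group G] (S : Set G) : Prop :=
  ∃ c : ℝ, 1 < c ∧ ∀ N : ℕ, ∃ r : ℕ, N ≤ r ∧ 0 < r ∧
    ∃ T : Finset G, (∀ g ∈ T, groupWordDist S 1 g ≤ r) ∧ (c : ℝ) ^ r ≤ (T.card : ℝ)

/-- The pinned travelling salesman metric associated with the distance function `ρ`
and basepoint `x0`, evaluated on two (finitely supported) functions `X → ZMod 2`. -/
def TS {X : Type*} (ρ : X → X → ℝ) (x0 : X) (A B : X → ZMod 2) : ℝ :=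
  if A = B then 0
  else 1 + sInf {L : ℝ | ∃ (ℓ : ℕ) (x : ℕ → X), 1 ≤ ℓ ∧ x 0 = x0 ∧ x ℓ = x0 ∧
    (∀ p : X, A p + B p ≠ 0 → ∃ i < ℓ, x i = p) ∧
    L = ∑ i ∈ Finset.range ℓ, ρ (x i) (x (i + 1))}

/-- The quotient of an addition-invariant distance function `d` by the subgroup `F`,
expressed on representatives: `quotDistBy d F x y = inf_{v ∈ F} d x (y + v)`. -/
def quotDistBy {E : Type*} [Add E] (d : E → E → ℝ) (F : Set E) (x y : E) : ℝ :=
  sInf {r : ℝ | ∃ v ∈ F, r = d x (y + v)}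

/-- The distortion of a map `f` between "metric" spaces `(Y, σ)` and `(Z, θ)`, where the
suprema defining it run over pairs satisfying the apartness relation `P`
(typically: `≠`, or "lying in distinct cosets"). -/
def distortionOn {Y Z : Type*} (σ : Y → Y → ℝ) (θ : Z → Z → ℝ)
    (P : Y → Y → Prop) (f : Y → Z) : ℝ :=
  sSup {r : ℝ | ∃ u v, P u v ∧ r = θ (f u) (f v) / σ u v} *
  sSup {r : ℝ | ∃ u v, P u v ∧ r = σ u v / θ (f u) (f v)}

/-- Multiplication of the (restricted) wreath-product-style semidirect product
`M^{⊕H} ⋊ H`, where `H` has multiplication `hmul` and acts on `H →₀ M` by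
coordinate right-translation:
`(a, h₁) · (b, h₂) = ((a (· h₂⁻¹)) + b, h₁ h₂)`. -/
def wrMul {H M : Type*} [AddCommMonoid M] (hmul : H → H → H) :
    ((H →₀ M) × H) → ((H →₀ M) × H) → ((H →₀ M) × H) :=
  fun x y => (Finsupp.mapDomain (fun h => hmul h y.2) x.1 + y.1, hmul x.2 y.2)

/-- The lifted generating set `{(±e_{e_G}, e_G)} ∪ {(0, s) : s ∈ S}` of `Z₆ ≀ G`. -/
def liftGens6 {G : Type*} [Group G] (S : Set G) : Set ((G →₀ ZMod 6) × G) :=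
  {p | p = (Finsupp.single (1 : G) (1 : ZMod 6), (1 : G)) ∨
       p = (Finsupp.single (1 : G) (-1 : ZMod 6), (1 : G)) ∨
       (p.1 = 0 ∧ p.2 ∈ S)}

/-- The lifted generating set `{(δ_{e_H}, e_H)} ∪ {(0, t) : t ∈ T}` of `Z₂^{⊕H} ⋊ H`
(and, after quotienting by an invariant subspace `V`, of `(Z₂^{⊕H}/V) ⋊ H`). -/
def liftGens2 {H : Type*} (eH : H) (T : Set H) : Set ((H →₀ ZMod 2) × H) :=
  {p | p = (Finsupp.single eH (1 : ZMod 2), eH) ∨ (p.1 = 0 ∧ p.2 ∈ T)}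

/-- The word metric of the quotient group `(Z₂^{⊕H}/V) ⋊ H` (`V` an `H`-invariant
subspace of `Z₂^{⊕H}`), expressed on representatives in `Z₂^{⊕H} × H`: the least
length of a word in `Gens` leading from `x` to some representative of the coset
of `y`. -/
def quotWordLen {H : Type*} (hmul : H → H → H) (V : Set (H →₀ ZMod 2))
    (Gens : Set ((H →₀ ZMod 2) × H)) (x y : (H →₀ ZMod 2) × H) : ℕ :=
  sInf {ℓ : ℕ | ∃ w : List ((H →₀ ZMod 2) × H), (∀ g ∈ w, g ∈ Gens) ∧ w.length = ℓ ∧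
    ∃ v ∈ V, w.foldl (wrMul hmul) x = (y.1 + v, y.2)}

/-- The word metric on `Z₆ = ZMod 6` for the generating set `{1, -1}`. -/
def z6dist (a b : ZMod 6) : ℕ := min (b - a).val (a - b).val

/-- The Hamming metric on `Z₆^I` built from the word metric on each factor. -/
def hamZ6 {I : Type*} [Fintype I] (u v : I → ZMod 6) : ℝ :=
  ∑ x, (z6dist (u x) (v x) : ℝ)

/-- The pinned travelling salesman metric on `Z₂^{Z₆^I}` over `(Z₆^I, d_Ham)`,
pinned at `0`. -/
def TSHam {I : Type*} [Fintype I] (A B : (I → ZMod 6) → ZMod 2) : ℝ :=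
  TS hamZ6 (0 : I → ZMod 6) A B

/-- Coordinatewise reduction `Z₆ → Z₂`. -/
def zbar (a : ZMod 6) : ZMod 2 := (a.val : ZMod 2)

/-- The `Z₂`-valued inner product on `Z₂^I`. -/
def ip2 {I : Type*} [Fintype I] (a b : I → ZMod 2) : ZMod 2 := ∑ x, a x * b x

/-- The annihilator of a set `C ⊆ Z₂^I`. -/
def perp2 {I : Type*} [Fintype I] (C : Set (I → ZMod 2)) : Set (I → ZMod 2) :=
  {a | ∀ c ∈ C, ip2 a c = 0}

/-- The `Z₂`-valued inner product on `Z₂^α` for a finite type `α`. -/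
def ipF {α : Type*} [Fintype α] (W V : α → ZMod 2) : ZMod 2 := ∑ w, W w * V w

/-- The linear functional `L_a : Z₆^I → Z₂`, `L_a(v) = ⟨v̄, a⟩`. -/
def La {I : Type*} [Fintype I] (a : I → ZMod 2) : (I → ZMod 6) → ZMod 2 :=
  fun v => ∑ x, zbar (v x) * a x

/-- The subspace `D = span({1} ∪ {L_a : a ∈ C}) ≤ Z₂^{Z₆^I}`. -/
def Dspan {I : Type*} [Fintype I] (C : Set (I → ZMod 2)) :
    Submodule (ZMod 2) ((I → ZMod 6) → ZMod 2) :=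
  Submodule.span (ZMod 2) ({fun _ => (1 : ZMod 2)} ∪ (La '' C))

/-- The annihilator `D^⊥` of `D = span({1} ∪ {L_a : a ∈ C})` inside `Z₂^{Z₆^I}`. -/
def DperpSet {I : Type*} [Fintype I] (C : Set (I → ZMod 2)) :
    Set ((I → ZMod 6) → ZMod 2) :=
  {W | ∀ D' ∈ Dspan C, ipF W D' = 0}

/-- The set `B = {e_x : x ∈ I}` of standard basis vectors in `Z₆^I`. -/
def Bset {I : Type*} [Fintype I] : Set (I → ZMod 6) :=
  Set.range (fun x : I => Pi.single x (1 : ZMod 6))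

/-- The embedding `ξ : Z₂^I → Z₂^{Z₆^I}`: `ξ(a)` is supported on `B` with
`ξ(a)(e_x) = a_x`. -/
def xi {I : Type*} [Fintype I] (a : I → ZMod 2) : (I → ZMod 6) → ZMod 2 :=
  fun w => ∑ x : I, if w = (Pi.single x (1 : ZMod 6) : I → ZMod 6) then a x else 0

/-- The map `R : Z₂^{Z₆^I} → Z₂^{Z₆^I}`: `R(W)` is supported on `B` with
`R(W)(e_x) = Σ_w W(w)·⟨ē_x, w̄⟩`. -/
def Rmap {I : Type*} [Fintype I] (W : (I → ZMod 6) → ZMod 2) :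
    (I → ZMod 6) → ZMod 2 :=
  fun w => ∑ x : I, if w = (Pi.single x (1 : ZMod 6) : I → ZMod 6) then (∑ v : I → ZMod 6, W v * zbar (v x)) else 0

/-- The indicator function `𝒜 : Z₆ → Z₂` of `{0, 1, 3, 4} ⊆ Z₆`. -/
def Acal : ZMod 6 → ZMod 2 := fun v => if v = 0 ∨ v = 1 ∨ v = 3 ∨ v = 4 then 1 else 0


/-- The map `Q_n` of the paper: given the excluded region `E` (which should equal
`I₁ ∪ ⋯ ∪ Iₙ ∪ {y₁, …, yₙ}`), the set `Iₙ = In`, the point `yₙ = yn`,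
a vector `u ∈ Z₆^{⊕(X∖E)}`, a function `W ∈ Z₂^{Z₆^{Iₙ}}` and `u' ∈ Z₆`,
`Qmap E In yn u W u'` is the element of `Z₂^{Z₆^{⊕X}}` given by
`w ↦ [w|_{X∖E} = u|_{X∖E}] ⬝ W(w|_{Iₙ}) ⬝ 𝒜(w_{yₙ} - u')`. -/
def Qmap {X : Type*} (E : Set X) (In : Finset X) (yn : X)
    (u : X →₀ ZMod 6) (W : ({x // x ∈ In} → ZMod 6) → ZMod 2) (u' : ZMod 6) :
    (X →₀ ZMod 6) → ZMod 2 :=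
  fun w => (if ∀ x ∉ E, w x = u x then 1 else 0) *
    W (fun x => w x.1) * Acal (w yn - u')

/-- The finite set `Eₙ = I₁ ∪ ⋯ ∪ Iₙ ∪ {y₁, …, yₙ}` (with indexing starting at `0`). -/
def EFin {G : Type*} (I : ℕ → Finset G) (y : ℕ → G) (n : ℕ) : Finset G :=
  ((Finset.range (n + 1)).biUnion I) ∪ (Finset.range (n + 1)).image y

/-- The function `Q̃ₙ(0, W, 0) ∈ Z₂^{⊕(Z₆ ≀ G)}`, realized as a finitely supported
function: it is supported on pairs `(w, e_G)` with `w` supported inside `E`, and its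
value there is `W(w|_{Iₙ}) ⬝ 𝒜(w_{yₙ})`.  (Here `E` should contain `Iₙ` and `yₙ`;
it will be `EFin I y n`.) -/
def QF {G : Type*} [Group G] (E : Finset G) (In : Finset G) (yn : G)
    (W : ({x // x ∈ In} → ZMod 6) → ZMod 2) : (((G →₀ ZMod 6) × G) →₀ ZMod 2) :=
  ∑ f : ({x // x ∈ E} → ZMod 6),
    Finsupp.single ((∑ x ∈ E.attach, Finsupp.single (x : G) (f x), (1 : G)))
      (W (fun x => if h : (x : G) ∈ E then f ⟨x, h⟩ else 0) *
        Acal (if h : yn ∈ E then f ⟨yn, h⟩ else 0))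

/-- Given a translation-invariant subspace `U ≤ Z₂^{⊕((Z₆ ≀ G)₀)}` (the zero section
being identified with `Z₆^{⊕G}`), the subspace
`V := {𝒱 ∈ Z₂^{⊕(Z₆ ≀ G)} : ∀ g₁, ((w_g)_g ↦ 𝒱((w_{g g₁⁻¹})_g, g₁)) ∈ U}`. -/
def Vext {G : Type*} [Group G] (U : Set ((G →₀ ZMod 6) →₀ ZMod 2)) :
    Set (((G →₀ ZMod 6) × G) →₀ ZMod 2) :=
  {V : ((G →₀ ZMod 6) × G) →₀ ZMod 2 | ∀ g₁ : G, ∃ u ∈ U,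
    ∀ w : G →₀ ZMod 6, u w = V (Finsupp.mapDomain (· * g₁) w, g₁)}

/-- Extension by zero of a function on the zero section `(Z₆ ≀ G)₀ ≅ Z₆^{⊕G}`
to all of `Z₆ ≀ G`. -/
def extZero {G : Type*} [Group G] (A : (G →₀ ZMod 6) →₀ ZMod 2) :
    ((G →₀ ZMod 6) × G) →₀ ZMod 2 :=
  Finsupp.mapDomain (fun w => (w, (1 : G))) A

end

section AuxRmap

variable {I : Type*} [Fintype I]

lemma single6_inj : Function.Injective (fun x : I => (Pi.single x (1 : ZMod 6) : I → ZMod 6)) := by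
  intro x y h
  by_contra hxy
  have h1 := congrFun h x
  simp [Pi.single_apply, hxy] at h1
  exact absurd h1 (by decide)

lemma zbar_ite (x y : I) :
    zbar ((Pi.single x (1 : ZMod 6) : I → ZMod 6) y) = if y = x then 1 else 0 := by
  by_cases h : y = x <;> simp [Pi.single_apply, h] <;> decide

lemma La_single (a : I → ZMod 2) (x : I) :
    La a (Pi.single x (1 : ZMod 6)) = a x := by
  unfold La
  simp [zbar_ite, ite_mul, Finset.sum_ite_eq']

lemma ipF_La (W : (I → ZMod 6) → ZMod 2) (a : I → ZMod 2) :
    ipF W (La a) = ∑ x : I, (∑ v : I → ZMod 6, W v * zbar (v x)) * a x := by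
  unfold ipF La
  simp only [Finset.mul_sum, Finset.sum_mul, mul_assoc]
  exact Finset.sum_comm

lemma ipF_Rmap (W : (I → ZMod 6) → ZMod 2) (f : (I → ZMod 6) → ZMod 2) :
    ipF (Rmap W) f = ∑ x : I,
      (∑ v : I → ZMod 6, W v * zbar (v x)) * f (Pi.single x (1 : ZMod 6)) := by
  unfold ipF Rmap
  simp only [Finset.sum_mul, ite_mul, zero_mul]
  rw [Finset.sum_comm]
  refine Finset.sum_congr rfl fun x _ => ?_
  simp [Finset.sum_ite_eq']

lemma ipF_sub (X Y f : (I → ZMod 6) → ZMod 2) :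
    ipF (X - Y) f = ipF X f - ipF Y f := by
  unfold ipF
  rw [← Finset.sum_sub_distrib]
  exact Finset.sum_congr rfl fun w _ => by rw [Pi.sub_apply, sub_mul]

lemma Rmap_apply_single (W : (I → ZMod 6) → ZMod 2) (x : I) :
    Rmap W (Pi.single x (1 : ZMod 6)) = ∑ v : I → ZMod 6, W v * zbar (v x) := by
  unfold Rmap
  rw [Finset.sum_eq_single_of_mem x (Finset.mem_univ x) (fun y _ hy => ?_), if_pos rfl]
  rw [if_neg]
  intro h
  exact hy (single6_inj h).symm

lemma Rmap_apply_of_notB (W : (I → ZMod 6) → ZMod 2) (w : I → ZMod 6)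
    (h : w ∉ (Bset : Set (I → ZMod 6))) : Rmap W w = 0 := by
  unfold Rmap
  refine Finset.sum_eq_zero fun x _ => ?_
  rw [if_neg]
  intro hw
  exact h ⟨x, hw.symm⟩

lemma support_Rmap (W : (I → ZMod 6) → ZMod 2) :
    Function.support (Rmap W) =
      (fun x : I => (Pi.single x (1 : ZMod 6) : I → ZMod 6)) ''
        {x | ∑ v : I → ZMod 6, W v * zbar (v x) ≠ 0} := by
  ext w
  constructor
  · intro hw
    by_cases hB : w ∈ (Bset : Set (I → ZMod 6))
    · obtain ⟨x, hx⟩ := hB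
      refine ⟨x, ?_, hx⟩
      rw [Function.mem_support, ← hx, Rmap_apply_single] at hw
      exact hw
    · exact absurd (Rmap_apply_of_notB W w hB) hw
  · rintro ⟨x, hx, rfl⟩
    simpa [Function.mem_support, Rmap_apply_single] using hx

end AuxRmap

/-- The map `R` preserves all the pairings with the functionals `L_a`:
`⟨⟨W, L_a⟩⟩ = ⟨⟨R(W), L_a⟩⟩`, and `|spt R(W)| ≡ ⟨⟨W, L_{1}⟩⟩ (mod 2)`.  Consequently if
`C ≤ Z₂^I` contains the all-ones vector, `D := span({1} ∪ {L_a : a ∈ C})`, and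
`W ∈ V + D^⊥` with `V` supported on `B`, then `R(W) - W ∈ D^⊥`. -/
theorem Rmap_pairing_invariance {I : Type*} [Fintype I] [Nonempty I] :
    (∀ (W : (I → ZMod 6) → ZMod 2) (a : I → ZMod 2),
      ipF W (La a) = ipF (Rmap W) (La a)) ∧
    (∀ W : (I → ZMod 6) → ZMod 2,
      ((Set.ncard (Function.support (Rmap W)) : ZMod 2)) =
        ipF W (La (fun _ => (1 : ZMod 2)))) ∧
    (∀ C : Submodule (ZMod 2) (I → ZMod 2), (fun _ => (1 : ZMod 2)) ∈ C →
      ∀ V W : (I → ZMod 6) → ZMod 2, Function.support V ⊆ Bset →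
        W - V ∈ DperpSet (C : Set (I → ZMod 2)) →
        Rmap W - W ∈ DperpSet (C : Set (I → ZMod 2))) := by
  have two_ne : ∀ b : ZMod 2, b ≠ 0 → b = 1 := by decide
  have part1 : ∀ (W : (I → ZMod 6) → ZMod 2) (a : I → ZMod 2),
      ipF W (La a) = ipF (Rmap W) (La a) := by
    intro W a
    rw [ipF_La, ipF_Rmap]
    exact Finset.sum_congr rfl fun x _ => by rw [La_single]
  have part2 : ∀ W : (I → ZMod 6) → ZMod 2,
      ((Set.ncard (Function.support (Rmap W)) : ZMod 2)) =
        ipF W (La (fun _ => (1 : ZMod 2))) := by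
    intro W
    set c : I → ZMod 2 := fun x => ∑ v : I → ZMod 6, W v * zbar (v x) with hc
    have hgoal : ipF W (La (fun _ => (1 : ZMod 2))) = ∑ x : I, c x := by
      rw [ipF_La]; simp [hc]
    rw [hgoal, support_Rmap, Set.ncard_image_of_injective _ single6_inj]
    have h1 : ({x : I | c x ≠ 0}).ncard
        = (Finset.univ.filter (fun x : I => c x ≠ 0)).card := by
      rw [Set.ncard_eq_toFinset_card']
      congr 1
      ext x
      simp
    rw [h1]
    calc (((Finset.univ.filter (fun x : I => c x ≠ 0)).card : ZMod 2))
        = ∑ _x ∈ Finset.univ.filter (fun x : I => c x ≠ 0), (1 : ZMod 2) := by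
          rw [Finset.card_eq_sum_ones]; push_cast; rfl
      _ = ∑ x ∈ Finset.univ.filter (fun x : I => c x ≠ 0), c x :=
          Finset.sum_congr rfl (fun x hx =>
            (two_ne _ (Finset.mem_filter.mp hx).2).symm)
      _ = ∑ x : I, c x := Finset.sum_filter_ne_zero _
  refine ⟨part1, part2, ?_⟩
  intro C hC V W hV hWV
  have h1D : (fun _ : I → ZMod 6 => (1 : ZMod 2)) ∈ Dspan (C : Set (I → ZMod 2)) :=
    Submodule.subset_span (Or.inl rfl)
  have hLa1D : La (fun _ : I => (1 : ZMod 2)) ∈ Dspan (C : Set (I → ZMod 2)) :=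
    Submodule.subset_span (Or.inr ⟨_, hC, rfl⟩)
  have hWf : ∀ f ∈ Dspan (C : Set (I → ZMod 2)), ipF W f = ipF V f := by
    intro f hf
    have h := hWV f hf
    rw [ipF_sub] at h
    exact sub_eq_zero.mp h
  have hVLa1 : ipF V (La (fun _ => (1 : ZMod 2))) = ipF V (fun _ => 1) := by
    unfold ipF
    refine Finset.sum_congr rfl fun w _ => ?_
    by_cases h : V w = 0
    · rw [h, zero_mul, zero_mul]
    · obtain ⟨x, hx⟩ := hV h
      rw [← hx, La_single]
  set ψ : ((I → ZMod 6) → ZMod 2) →ₗ[ZMod 2] ZMod 2 :=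
    ∑ w : I → ZMod 6, (Rmap W - W) w •
      (LinearMap.proj w : ((I → ZMod 6) → ZMod 2) →ₗ[ZMod 2] ZMod 2) with hψdef
  have hψ : ∀ f : (I → ZMod 6) → ZMod 2, ψ f = ipF (Rmap W - W) f := by
    intro f
    rw [hψdef]
    simp [ipF, LinearMap.sum_apply, LinearMap.smul_apply, LinearMap.proj_apply,
      smul_eq_mul]
  have key : Dspan (C : Set (I → ZMod 2)) ≤ LinearMap.ker ψ := by
    rw [Dspan, Submodule.span_le]
    rintro f (rfl | ⟨a, ha, rfl⟩) <;>
      rw [SetLike.mem_coe, LinearMap.mem_ker, hψ, ipF_sub]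
    · have e1 : ipF (Rmap W) (fun _ => (1 : ZMod 2))
          = ipF W (La (fun _ => (1 : ZMod 2))) := by
        rw [ipF_Rmap, ipF_La]
      rw [e1, hWf _ hLa1D, hWf _ h1D, hVLa1, sub_self]
    · rw [← part1 W a, sub_self]
  intro D' hD'
  have h := key hD'
  rw [LinearMap.mem_ker, hψ] at h
  exact h
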